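/- arXiv:1705.03852 — 5 statements merged into one kernel-verified Lean document; each statement's English description precedes it below -/
import Mathlib

section
/- Let ρ ∈ (0, 1/2), set α = -log(2ρ·e^{1-2ρ}) (which is positive), let t₀ > 0, let K ≥ 1 be an integer, and let d be a positive integer satisfying d ≥ (2(1+t₀)/α)·log K. If Y is a Poisson random variable with parameter ρd, then (K/d) · E[[Y − d]⁺] ≤ K^{−t₀}/√(2π), i.e. (K/d) · Σ_{k=d}^{∞} (k−d)·(ρd)^k e^{−ρd}/k! ≤ K^{−t₀}/√(2π). -/
/-!
Writing `k = d + j` and using `(d + j)! ≥ d! (d + 1)^j`, the tail sum is dominated by the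
Poisson mass at `d` times `∑ j rʲ` with `r = ρd/(d+1) ≤ 1/2`, which is at most `d`. Stirling's
bound turns the mass at `d` into `(ρ e^{1-ρ})^d / √(2πd)`, and `(ρ e^{1-ρ})² ≤ 2ρ e^{1-2ρ} = e^{-α}`
because `ρ e ≤ 2`. The hypothesis on `d` makes `e^{-αd/2} ≤ K^{-(1+t₀)}`.
-/

open Real
open scoped Nat

lemma mul_exp_one_sub_lt_one {x : ℝ} (hx : x ≠ 1) : x * exp (1 - x) < 1 := by
  have hlt : x < exp (x - 1) := by linarith [add_one_lt_exp (sub_ne_zero.mpr hx)]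
  calc x * exp (1 - x) < exp (x - 1) * exp (1 - x) := by gcongr
    _ = 1 := by rw [← exp_add]; simp

lemma mul_exp_one_sub_le_exp_log_div_two {ρ : ℝ} (hρ : 0 < ρ) (hρe : ρ * exp 1 ≤ 2) :
    ρ * exp (1 - ρ) ≤ exp (log (2 * ρ * exp (1 - 2 * ρ)) / 2) := by
  rw [exp_half, exp_log (by positivity), le_sqrt (by positivity) (by positivity)]
  calc (ρ * exp (1 - ρ)) ^ 2 = ρ * exp 1 * (ρ * exp (1 - 2 * ρ)) := by
        rw [mul_pow, sq (exp _), ← exp_add, mul_mul_mul_comm, ← exp_add]; ring_nf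
    _ ≤ 2 * (ρ * exp (1 - 2 * ρ)) := by gcongr
    _ = 2 * ρ * exp (1 - 2 * ρ) := by ring

lemma exp_neg_mul_pow_div_factorial_le {ρ : ℝ} (hρ : 0 ≤ ρ) {d : ℕ} (hd : d ≠ 0) :
    exp (-(ρ * d)) * (ρ * d) ^ d / d ! ≤ (ρ * exp (1 - ρ)) ^ d / √(2 * π * d) := by
  have hkey : exp (-(ρ * d)) * (ρ * d) ^ d = (ρ * exp (1 - ρ)) ^ d * (d / exp 1) ^ d := by
    calc exp (-(ρ * d)) * (ρ * d) ^ d = (ρ * d * exp (-ρ)) ^ d := by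
          rw [mul_pow _ (exp _), ← exp_nat_mul]; ring_nf
      _ = (ρ * exp (1 - ρ) * (d / exp 1)) ^ d := by
          rw [exp_sub, exp_neg]; field_simp
      _ = _ := mul_pow _ _ _
  calc exp (-(ρ * d)) * (ρ * d) ^ d / d !
      ≤ (ρ * exp (1 - ρ)) ^ d * (d / exp 1) ^ d / (√(2 * π * d) * (d / exp 1) ^ d) := by
        rw [hkey]; gcongr; exact Stirling.le_factorial_stirling d
    _ = (ρ * exp (1 - ρ)) ^ d / √(2 * π * d) := by field_simp

lemma max_sub_mul_poisson_le {x : ℝ} (hx : 0 ≤ x) (d j : ℕ) :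
    max (((j + d : ℕ) : ℝ) - d) 0 * x ^ (j + d) * exp (-x) / (j + d)! ≤
      exp (-x) * x ^ d / d ! * (j * (x / (d + 1)) ^ j) := by
  have hmax : max (((j + d : ℕ) : ℝ) - d) 0 = j := by push_cast; simp
  have hfact : (d ! : ℝ) * ((d : ℝ) + 1) ^ j ≤ (j + d)! := by
    rw [add_comm j]; exact_mod_cast Nat.factorial_mul_pow_le_factorial
  calc _ = j * x ^ (j + d) * exp (-x) / (j + d)! := by rw [hmax]
    _ ≤ j * x ^ (j + d) * exp (-x) / (d ! * ((d : ℝ) + 1) ^ j) := by gcongr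
    _ = _ := by rw [div_pow]; field_simp; ring

lemma tsum_max_sub_mul_poisson_le {x : ℝ} (hx : 0 ≤ x) {d : ℕ} (hxd : x < d + 1) :
    ∑' k : ℕ, max ((k : ℝ) - d) 0 * x ^ k * exp (-x) / k ! ≤
      exp (-x) * x ^ d / d ! * (x / (d + 1) / (1 - x / (d + 1)) ^ 2) := by
  set f : ℕ → ℝ := fun k ↦ max ((k : ℝ) - d) 0 * x ^ k * exp (-x) / (k !)
  have hr : ‖x / (d + 1)‖ < 1 := by
    rw [norm_of_nonneg (by positivity), div_lt_one (by positivity)]; exact hxd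
  have hgeom := (hasSum_coe_mul_geometric_of_norm_lt_one hr).mul_left (exp (-x) * x ^ d / d !)
  have hsupp : Function.support f ⊆ Set.range (· + d) := by
    intro k hk
    refine ⟨k - d, Nat.sub_add_cancel ?_⟩
    by_contra! h
    have hkd : (k : ℝ) < d := by exact_mod_cast h
    exact hk (by simp [f, max_eq_right (by linarith : (k : ℝ) - d ≤ 0)])
  rw [← (add_left_injective d).tsum_eq hsupp, ← hgeom.tsum_eq]
  have hle := max_sub_mul_poisson_le hx d
  exact Summable.tsum_le_tsum hle
    (hgeom.summable.of_nonneg_of_le (fun j ↦ by positivity) hle) hgeom.summable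

lemma tsum_max_sub_mul_poisson_le_mul {x : ℝ} (hx : 0 ≤ x) {d : ℕ} (hxd : 2 * x ≤ d) :
    ∑' k : ℕ, max ((k : ℝ) - d) 0 * x ^ k * exp (-x) / k ! ≤ exp (-x) * x ^ d / d ! * d := by
  refine (tsum_max_sub_mul_poisson_le hx (by linarith)).trans ?_
  gcongr
  set r := x / (d + 1)
  have hrd : r * (d + 1) = x := div_mul_cancel₀ _ (by positivity)
  have hr0 : 0 ≤ r := by positivity
  have hdd : (d : ℝ) ≤ d ^ 2 := by exact_mod_cast Nat.le_self_pow two_ne_zero d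
  rw [div_le_iff₀ (by nlinarith)]
  nlinarith

theorem stmt_0_general (ρ : ℝ) (hρ : ρ ∈ Set.Ioo (0:ℝ) (1/2))
    (t₀ : ℝ)
    (K : ℕ) (hK : 1 ≤ K)
    (d : ℕ) (hd : 0 < d)
    (hdK : (d : ℝ) ≥ (2 * (1 + t₀) / (-Real.log (2 * ρ * Real.exp (1 - 2 * ρ)))) * Real.log K) :
    (K : ℝ) / d *
        ∑' k : ℕ, max ((k : ℝ) - d) 0 * (ρ * d) ^ k * Real.exp (-(ρ * d)) / (Nat.factorial k)
      ≤ (K : ℝ) ^ (-t₀) / Real.sqrt (2 * Real.pi) := by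
  obtain ⟨hρ0, hρ2⟩ := hρ
  set α := -log (2 * ρ * exp (1 - 2 * ρ)) with hα_def
  have hα : 0 < α := neg_pos.mpr (log_neg (by positivity) (mul_exp_one_sub_lt_one (by linarith)))
  have hK0 : (0 : ℝ) < K := by exact_mod_cast hK
  have hdα : (1 + t₀) * log K ≤ d * (α / 2) := by
    have := mul_le_mul_of_nonneg_right hdK hα.le
    field_simp at this ⊢
    linarith
  have hbase : (ρ * exp (1 - ρ)) ^ d ≤ exp (d * -(α / 2)) := by
    rw [exp_nat_mul]
    gcongr
    simpa [hα_def, neg_div] using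
      mul_exp_one_sub_le_exp_log_div_two hρ0 (by nlinarith [exp_one_lt_d9, exp_pos 1])
  have hrpow : (K : ℝ) * exp (-((1 + t₀) * log K)) = K ^ (-t₀) := by
    rw [rpow_def_of_pos hK0]; nth_rw 1 [← exp_log hK0]; rw [← exp_add]; ring_nf
  calc (K : ℝ) / d * ∑' k : ℕ, max ((k : ℝ) - d) 0 * (ρ * d) ^ k * exp (-(ρ * d)) / k !
      ≤ K / d * (exp (-(ρ * d)) * (ρ * d) ^ d / d ! * d) := by
        gcongr
        exact tsum_max_sub_mul_poisson_le_mul (by positivity) (by nlinarith)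
    _ = K * (exp (-(ρ * d)) * (ρ * d) ^ d / d !) := by field_simp
    _ ≤ K * ((ρ * exp (1 - ρ)) ^ d / √(2 * π * d)) := by
        gcongr K * ?_; exact exp_neg_mul_pow_div_factorial_le hρ0.le hd.ne'
    _ ≤ K * (exp (d * -(α / 2)) / √(2 * π)) := by
        gcongr K * (?_ / √?_)
        exact le_mul_of_one_le_right (by positivity) (by exact_mod_cast hd)
    _ ≤ K * exp (-((1 + t₀) * log K)) / √(2 * π) := by
        rw [mul_div_assoc]; gcongr; linarith
    _ = K ^ (-t₀) / √(2 * π) := by rw [hrpow]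

/-- Expected number of unmatched users bound for PCD. -/
theorem stmt_0 (ρ : ℝ) (hρ : ρ ∈ Set.Ioo (0:ℝ) (1/2))
    (t₀ : ℝ) (ht₀ : 0 < t₀)
    (K : ℕ) (hK : 1 ≤ K)
    (d : ℕ) (hd : 0 < d)
    (hdK : (d : ℝ) ≥ (2 * (1 + t₀) / (-Real.log (2 * ρ * Real.exp (1 - 2 * ρ)))) * Real.log K) :
    (K : ℝ) / d *
        ∑' k : ℕ, max ((k : ℝ) - d) 0 * (ρ * d) ^ k * Real.exp (-(ρ * d)) / (Nat.factorial k)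
      ≤ (K : ℝ) ^ (-t₀) / Real.sqrt (2 * Real.pi) :=
  stmt_0_general ρ hρ t₀ K hK d hd hdK
end

section
/- Let β ∈ [0, 1), let N ≥ 1 be an integer, define A_N = Σ_{n=1}^{N} n^{−β} and the Zipf popularities p_n = n^{−β}/A_N for n ∈ {1,…,N}. Let χ be a positive integer with χ ≤ N/4, let x ∈ {1,…,χ}, and let 𝒲_x = { n ∈ {1,…,N} : n ≡ x (mod χ) }. Then the total popularity of color x satisfies Σ_{n ∈ 𝒲_x} p_n ≥ g/χ, where g = (3^{1−β} − 1)/4^{1−β}. -/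
open Real Finset

/-!
Write `s = 1 - β`. Comparing with `∫ t ^ (-β) dt`, the normalizer satisfies `A_N ≤ N ^ s / s`.
With `M = ⌊N / χ⌋`, each block `{jχ + 1, …, (j + 1)χ}` with `j < M` contains the member
`jχ + x` of the class, of weight at least `((j + 1)χ) ^ (-β)`; hence the class has weight at least
`χ ^ (-β) ∑_{m ≤ M} m ^ (-β) ≥ χ ^ (-β) ((M + 1) ^ s - 1) / s`. Finally `N < (M + 1)χ` and
`χ ≤ N / 4` give `χ ^ s ((M + 1) ^ s - 1) ≥ N ^ s - χ ^ s ≥ (1 - 4 ^ (-s)) N ^ s ≥ g N ^ s`.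
-/

lemma integral_one_rpow_neg {β : ℝ} (hβ : β ≠ 1) {c : ℝ} (hc : 0 < c) :
    ∫ t in (1 : ℝ)..c, t ^ (-β) = (c ^ (1 - β) - 1) / (1 - β) := by
  have h0 : (0 : ℝ) ∉ Set.uIcc 1 c := by
    rw [Set.mem_uIcc]; rintro (⟨h, -⟩ | ⟨h, -⟩) <;> linarith
  rw [integral_rpow (Or.inr ⟨fun h => hβ (by linarith), h0⟩), one_rpow, neg_add_eq_sub]

lemma antitoneOn_rpow_neg {β : ℝ} (hβ : 0 ≤ β) :
    AntitoneOn (fun t : ℝ => t ^ (-β)) (Set.Ioi 0) :=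
  fun _ ha _ _ hab => rpow_le_rpow_of_nonpos ha hab (neg_nonpos.mpr hβ)

lemma sum_Icc_rpow_neg_le {β : ℝ} (hβ : β ∈ Set.Ico (0 : ℝ) 1) (N : ℕ) :
    ∑ n ∈ Icc 1 N, (n : ℝ) ^ (-β) ≤ (N : ℝ) ^ (1 - β) / (1 - β) := by
  obtain ⟨hβ0, hβ1⟩ := hβ
  have hs : 0 < 1 - β := by linarith
  rcases Nat.eq_zero_or_pos N with rfl | hN
  · simp [zero_rpow hs.ne']
  have htail : ∑ i ∈ Ico 1 N, ((i + 1 : ℕ) : ℝ) ^ (-β) ≤ ∫ t in (1 : ℝ)..N, t ^ (-β) := by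
    have := AntitoneOn.sum_le_integral_Ico (f := fun t : ℝ => t ^ (-β)) (a := 1) hN
      ((antitoneOn_rpow_neg hβ0).mono fun _ ht => lt_of_lt_of_le (by norm_num) ht.1)
    simpa using this
  rw [integral_one_rpow_neg hβ1.ne (by exact_mod_cast hN)] at htail
  rw [← add_sum_Ioc_eq_sum_Icc hN, ← Ico_add_one_add_one_eq_Ioc, ← sum_Ico_add']
  have h1 : ((1 : ℕ) : ℝ) ^ (-β) ≤ 1 / (1 - β) := by
    rw [Nat.cast_one, one_rpow, le_div_iff₀ hs]; linarith
  calc _ ≤ 1 / (1 - β) + ((N : ℝ) ^ (1 - β) - 1) / (1 - β) := add_le_add h1 htail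
    _ = _ := by ring

lemma sum_range_rpow_neg_ge {β : ℝ} (hβ0 : 0 ≤ β) (hβ1 : β ≠ 1) (M : ℕ) :
    (((M : ℝ) + 1) ^ (1 - β) - 1) / (1 - β) ≤ ∑ j ∈ range M, ((j : ℝ) + 1) ^ (-β) := by
  have h := AntitoneOn.integral_le_sum (x₀ := 1) (a := M)
    ((antitoneOn_rpow_neg hβ0).mono fun _ ht => lt_of_lt_of_le (by norm_num) ht.1)
  rw [integral_one_rpow_neg hβ1 (by positivity), add_comm] at h
  simpa only [add_comm (1 : ℝ)] using h

lemma sum_range_le_sum_filter_mod (f : ℕ → ℝ) (hf : AntitoneOn f (Set.Ici 1))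
    (hf0 : ∀ n, 0 ≤ f n) {χ x : ℕ} (hx1 : 1 ≤ x) (hxχ : x ≤ χ) (N : ℕ) :
    ∑ j ∈ range (N / χ), f ((j + 1) * χ) ≤
      ∑ n ∈ (Icc 1 N).filter (fun n => n % χ = x % χ), f n := by
  have hχ : 0 < χ := by omega
  have hinj : Set.InjOn (fun j => j * χ + x) (range (N / χ)) := fun a _ b _ hab => by
    simpa [hχ.ne'] using hab
  calc ∑ j ∈ range (N / χ), f ((j + 1) * χ)
      ≤ ∑ j ∈ range (N / χ), f (j * χ + x) := by
        refine sum_le_sum fun j _ => hf (Set.mem_Ici.mpr ?_) (Set.mem_Ici.mpr ?_) ?_ <;> nlinarith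
    _ = ∑ n ∈ (range (N / χ)).image (fun j => j * χ + x), f n := (sum_image hinj).symm
    _ ≤ _ := by
        refine sum_le_sum_of_subset_of_nonneg ?_ fun n _ _ => hf0 n
        intro n hn
        simp only [mem_image, mem_range] at hn
        obtain ⟨j, hj, rfl⟩ := hn
        have : (j + 1) * χ ≤ N := by
          calc (j + 1) * χ ≤ N / χ * χ := Nat.mul_le_mul_right _ hj
            _ ≤ N := Nat.div_mul_le_self N χ
        simp only [mem_filter, mem_Icc, Nat.mul_add_mod_self_right, and_true]
        constructor <;> nlinarith

lemma rpow_neg_mul_le_sum_filter_mod {β : ℝ} (hβ0 : 0 ≤ β) (hβ1 : β ≠ 1) {χ x : ℕ}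
    (hx1 : 1 ≤ x) (hxχ : x ≤ χ) (N : ℕ) :
    (χ : ℝ) ^ (-β) * ((((N / χ : ℕ) : ℝ) + 1) ^ (1 - β) - 1) / (1 - β) ≤
      ∑ n ∈ (Icc 1 N).filter (fun n => n % χ = x % χ), (n : ℝ) ^ (-β) := by
  have hf : AntitoneOn (fun n : ℕ => (n : ℝ) ^ (-β)) (Set.Ici 1) := by
    intro a ha b _ hab
    have hab' : (a : ℝ) ≤ b := by exact_mod_cast hab
    have ha' : (0 : ℝ) < a := Nat.cast_pos.mpr ha
    exact antitoneOn_rpow_neg hβ0 ha' (ha'.trans_le hab') hab'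
  calc (χ : ℝ) ^ (-β) * ((((N / χ : ℕ) : ℝ) + 1) ^ (1 - β) - 1) / (1 - β)
      = (χ : ℝ) ^ (-β) * (((((N / χ : ℕ) : ℝ) + 1) ^ (1 - β) - 1) / (1 - β)) := by ring
    _ ≤ (χ : ℝ) ^ (-β) * ∑ j ∈ range (N / χ), ((j : ℝ) + 1) ^ (-β) := by
        gcongr; exact sum_range_rpow_neg_ge hβ0 hβ1 _
    _ = ∑ j ∈ range (N / χ), (((j + 1) * χ : ℕ) : ℝ) ^ (-β) := by
        rw [mul_sum]
        refine sum_congr rfl fun j _ => ?_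
        rw [Nat.cast_mul, Nat.cast_succ, mul_rpow (by positivity) (by positivity), mul_comm]
    _ ≤ _ := sum_range_le_sum_filter_mod _ hf (fun n => by positivity) hx1 hxχ N

lemma three_rpow_sub_one_div_four_rpow_mul_le {s χ N m : ℝ} (hs : 0 ≤ s) (hχ : 0 < χ)
    (hN : N ≤ m * χ) (hχN : χ ≤ N / 4) :
    (3 ^ s - 1) / 4 ^ s * N ^ s ≤ χ ^ s * (m ^ s - 1) := by
  have hN0 : 0 ≤ N := by linarith
  have h34 : (3 : ℝ) ^ s ≤ 4 ^ s := rpow_le_rpow (by norm_num) (by norm_num) hs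
  have hm : N ^ s ≤ χ ^ s * m ^ s := by
    rw [← mul_rpow hχ.le (by nlinarith)]; exact rpow_le_rpow hN0 (by linarith) hs
  have hχs : χ ^ s ≤ N ^ s / 4 ^ s := by
    rw [← div_rpow hN0 (by norm_num)]; exact rpow_le_rpow hχ.le hχN hs
  calc (3 ^ s - 1) / 4 ^ s * N ^ s ≤ (4 ^ s - 1) / 4 ^ s * N ^ s := by gcongr
    _ = N ^ s - N ^ s / 4 ^ s := by field_simp
    _ ≤ χ ^ s * (m ^ s - 1) := by linarith

theorem stmt_5_general (β : ℝ) (hβ : β ∈ Set.Ico (0:ℝ) 1) (N : ℕ)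
    (χ : ℕ) (hχN : (χ : ℝ) ≤ (N : ℝ) / 4)
    (x : ℕ) (hx : x ∈ Finset.Icc 1 χ) :
    ∑ n ∈ (Finset.Icc 1 N).filter (fun n => n % χ = x % χ),
        (n : ℝ) ^ (-β) / (∑ n ∈ Finset.Icc 1 N, (n : ℝ) ^ (-β))
      ≥ (((3 : ℝ) ^ (1 - β) - 1) / (4 : ℝ) ^ (1 - β)) / χ := by
  obtain ⟨hx1, hxχ⟩ := mem_Icc.mp hx
  have hs : 0 < 1 - β := by linarith [hβ.2]
  have hχ : (1 : ℝ) ≤ χ := by exact_mod_cast hx1.trans hxχ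
  set M := N / χ
  have hNM : (N : ℝ) ≤ ((M : ℝ) + 1) * χ := by
    exact_mod_cast (Nat.lt_div_mul_add (by omega : 0 < χ)).le.trans_eq (by ring)
  have hA : 0 < ∑ n ∈ Icc 1 N, (n : ℝ) ^ (-β) :=
    sum_pos (fun n hn => rpow_pos_of_pos (by exact_mod_cast (mem_Icc.mp hn).1) _)
      ⟨1, mem_Icc.mpr ⟨le_rfl, by exact_mod_cast (by linarith : (1 : ℝ) ≤ N)⟩⟩
  have hkey := three_rpow_sub_one_div_four_rpow_mul_le hs.le (by linarith) hNM hχN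
  rw [ge_iff_le, ← sum_div, le_div_iff₀ hA]
  calc _ ≤ ((3 : ℝ) ^ (1 - β) - 1) / 4 ^ (1 - β) / χ * ((N : ℝ) ^ (1 - β) / (1 - β)) := by
        have h3 : (1 : ℝ) ≤ 3 ^ (1 - β) := one_le_rpow (by norm_num) hs.le
        gcongr
        exact sum_Icc_rpow_neg_le hβ N
    _ = ((3 : ℝ) ^ (1 - β) - 1) / 4 ^ (1 - β) * (N : ℝ) ^ (1 - β) / χ / (1 - β) := by ring
    _ ≤ (χ : ℝ) ^ (1 - β) * (((M : ℝ) + 1) ^ (1 - β) - 1) / χ / (1 - β) := by gcongr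
    _ = (χ : ℝ) ^ (-β) * (((M : ℝ) + 1) ^ (1 - β) - 1) / (1 - β) := by
        rw [sub_eq_neg_add, rpow_add_one (by positivity)]; field_simp
    _ ≤ _ := rpow_neg_mul_le_sum_filter_mod hβ.1 hβ.2.ne hx1 hxχ N

/-- Lower bound on the popularity of each color class. -/
theorem stmt_5 (β : ℝ) (hβ : β ∈ Set.Ico (0:ℝ) 1) (N : ℕ) (hN : 1 ≤ N)
    (χ : ℕ) (hχ : 0 < χ) (hχN : (χ : ℝ) ≤ (N : ℝ) / 4)
    (x : ℕ) (hx : x ∈ Finset.Icc 1 χ) :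
    ∑ n ∈ (Finset.Icc 1 N).filter (fun n => n % χ = x % χ),
        (n : ℝ) ^ (-β) / (∑ n ∈ Finset.Icc 1 N, (n : ℝ) ^ (-β))
      ≥ (((3 : ℝ) ^ (1 - β) - 1) / (4 : ℝ) ^ (1 - β)) / χ :=
  stmt_5_general β hβ N χ hχN x hx
end

section
/- Let Y be a Poisson random variable with parameter λ > 0, let m ≥ 1 be an integer with m ≥ λ, and define U = [Y − m]⁺. Then E[U] ≤ m · Pr{Y = m}, i.e. Σ_{k=m}^{∞} (k−m)·λ^k e^{−λ}/k! ≤ m · λ^m e^{−λ}/m!. -/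
/-!
Write `p k = λ^k e^{-λ} / k!`. The recursion `k p k = λ p (k - 1)` rewrites each excess term as
`(k - m) p k = λ p (k - 1) - m p k` for `k > m`. Summing over `k > m` gives
`E[U] = λ p m + (λ - m) ∑_{k > m} p k`, and the second term is `≤ 0` because `λ ≤ m`.
-/

open Real Nat

noncomputable def poissonTerm (lam : ℝ) (k : ℕ) : ℝ :=
  lam ^ k * exp (-lam) / k !

lemma poissonTerm_nonneg {lam : ℝ} (hlam : 0 ≤ lam) (k : ℕ) : 0 ≤ poissonTerm lam k := by
  unfold poissonTerm
  positivity

lemma summable_poissonTerm (lam : ℝ) : Summable (poissonTerm lam) :=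
  ((summable_pow_div_factorial lam).mul_right (exp (-lam))).congr fun k => by
    simp only [poissonTerm]
    ring

lemma succ_mul_poissonTerm_succ (lam : ℝ) (k : ℕ) :
    ((k : ℝ) + 1) * poissonTerm lam (k + 1) = lam * poissonTerm lam k := by
  simp only [poissonTerm, factorial_succ, cast_mul, cast_succ, pow_succ]
  field_simp

lemma excess_mul_poissonTerm_of_le (lam : ℝ) {k m : ℕ} (hkm : k ≤ m) :
    max ((k : ℝ) - m) 0 * poissonTerm lam k = 0 := by
  rw [max_eq_right (by simpa using hkm), zero_mul]

lemma excess_mul_poissonTerm_add_succ (lam : ℝ) (m i : ℕ) :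
    max (((i + (m + 1) : ℕ) : ℝ) - m) 0 * poissonTerm lam (i + (m + 1))
      = lam * poissonTerm lam (i + m) - m * poissonTerm lam (i + m + 1) := by
  have hexcess : max (((i + (m + 1) : ℕ) : ℝ) - m) 0 = (i : ℝ) + 1 := by
    push_cast
    rw [max_eq_left] <;> linarith [(i.cast_nonneg : (0 : ℝ) ≤ i)]
  have hrec := succ_mul_poissonTerm_succ lam (i + m)
  push_cast at hrec
  rw [hexcess, ← add_assoc, ← hrec]
  ring

lemma hasSum_excess_mul_poissonTerm (lam : ℝ) (m : ℕ) :
    HasSum (fun k : ℕ => max ((k : ℝ) - m) 0 * poissonTerm lam k)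
      (lam * poissonTerm lam m + (lam - m) * ∑' i, poissonTerm lam (i + m + 1)) := by
  have hsummable_tail : Summable fun i => poissonTerm lam (i + m + 1) :=
    (summable_nat_add_iff (m + 1)).mpr (summable_poissonTerm lam)
  have htail : HasSum (fun i => poissonTerm lam (i + m))
      (poissonTerm lam m + ∑' i, poissonTerm lam (i + m + 1)) := by
    refine (hasSum_nat_add_iff' 1).mp ?_
    simpa [add_right_comm _ 1 m] using hsummable_tail.hasSum
  rw [← hasSum_nat_add_iff' (m + 1), Finset.sum_eq_zero fun k hk =>
    excess_mul_poissonTerm_of_le lam (Nat.lt_succ_iff.mp (Finset.mem_range.mp hk))]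
  convert (htail.mul_left lam).sub (hsummable_tail.hasSum.mul_left (m : ℝ)) using 1
  · exact funext (excess_mul_poissonTerm_add_succ lam m)
  · ring

theorem stmt_7_general (lam : ℝ) (hlam : 0 < lam) (m : ℕ) (hml : lam ≤ m) :
    ∑' k : ℕ, max ((k : ℝ) - m) 0 * lam ^ k * Real.exp (-lam) / (Nat.factorial k)
      ≤ m * (lam ^ m * Real.exp (-lam) / (Nat.factorial m)) := by
  have hpm : 0 ≤ poissonTerm lam m := poissonTerm_nonneg hlam.le m
  have htail : 0 ≤ ∑' i, poissonTerm lam (i + m + 1) :=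
    tsum_nonneg fun i => poissonTerm_nonneg hlam.le _
  calc ∑' k : ℕ, max ((k : ℝ) - m) 0 * lam ^ k * Real.exp (-lam) / (Nat.factorial k)
      = ∑' k : ℕ, max ((k : ℝ) - m) 0 * poissonTerm lam k := by
        simp only [poissonTerm, mul_div_assoc, mul_assoc]
    _ = lam * poissonTerm lam m + (lam - m) * ∑' i, poissonTerm lam (i + m + 1) :=
        (hasSum_excess_mul_poissonTerm lam m).tsum_eq
    _ ≤ m * poissonTerm lam m := by nlinarith [mul_nonneg (sub_nonneg.mpr hml) htail]

/-- Bound on the expected excess of a Poisson variable over m ≥ λ. -/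
theorem stmt_7 (lam : ℝ) (hlam : 0 < lam) (m : ℕ) (hm : 1 ≤ m) (hml : lam ≤ m) :
    ∑' k : ℕ, max ((k : ℝ) - m) 0 * lam ^ k * Real.exp (-lam) / (Nat.factorial k)
      ≤ m * (lam ^ m * Real.exp (-lam) / (Nat.factorial m)) :=
  stmt_7_general lam hlam m hml
end

section
/- Let X be a Poisson random variable with parameter μ > 0 and let ε ∈ (0, 1). Then Pr{ X ≥ (1+ε)·μ } ≤ exp( −μ · h(1+ε) ), where h(x) = x·log x + 1 − x; that is, Σ_{k : k ≥ (1+ε)μ} μ^k e^{−μ}/k! ≤ e^{−μ·h(1+ε)}. -/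
/-!
Exponential tilting (the Chernoff method): for `t ≥ 0` the indicator of `{k ≥ a}` is bounded by
`exp (t * (k - a))`, so the tail is at most `exp (-t a)` times the moment generating function
`exp (μ (eᵗ - 1))` of the Poisson law. The choice `t = log x` turns this into `exp (-μ h(x))`.
-/

open Real Nat

theorem hasSum_exp_mul_poisson (μ t : ℝ) :
    HasSum (fun k : ℕ => exp (t * k) * (μ ^ k * exp (-μ) / k !)) (exp (μ * (exp t - 1))) := by
  have hterm : (fun k : ℕ => exp (t * k) * (μ ^ k * exp (-μ) / k !)) =
      fun k : ℕ => exp (-μ) * ((μ * exp t) ^ k / k !) := by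
    funext k
    rw [mul_pow, ← exp_nat_mul, mul_comm (k : ℝ) t]
    ring
  have hlimit : exp (μ * (exp t - 1)) = exp (-μ) * exp (μ * exp t) := by
    rw [← exp_add]
    ring_nf
  have hexp := NormedSpace.expSeries_div_hasSum_exp (μ * exp t)
  rw [← exp_eq_exp_ℝ] at hexp
  rw [hterm, hlimit]
  exact hexp.mul_left _

theorem tsum_ite_le_le_exp_mul_tsum {α : Type*} (p x : α → ℝ) (hp : ∀ k, 0 ≤ p k)
    {t : ℝ} (ht : 0 ≤ t) (a : ℝ) (hs : Summable fun k => exp (t * x k) * p k) :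
    (∑' k, if a ≤ x k then p k else 0) ≤ exp (-(t * a)) * ∑' k, exp (t * x k) * p k := by
  have hle : ∀ k, (if a ≤ x k then p k else 0) ≤ exp (-(t * a)) * (exp (t * x k) * p k) := by
    intro k
    rw [← mul_assoc, ← exp_add]
    split_ifs with hk
    · have : 0 ≤ -(t * a) + t * x k := by nlinarith
      exact le_mul_of_one_le_left (hp k) (one_le_exp this)
    · exact mul_nonneg (exp_pos _).le (hp k)
  have hs' : Summable fun k => exp (-(t * a)) * (exp (t * x k) * p k) := hs.mul_left _
  calc (∑' k, if a ≤ x k then p k else 0)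
      ≤ ∑' k, exp (-(t * a)) * (exp (t * x k) * p k) :=
        (hs'.of_nonneg_of_le (fun k => by split_ifs <;> simp [hp k]) hle).tsum_le_tsum hle hs'
    _ = exp (-(t * a)) * ∑' k, exp (t * x k) * p k := tsum_mul_left

theorem poisson_upper_tail_le {μ : ℝ} (hμ : 0 ≤ μ) {x : ℝ} (hx : 1 ≤ x) :
    (∑' k : ℕ, if x * μ ≤ (k : ℝ) then μ ^ k * exp (-μ) / k ! else 0)
      ≤ exp (-μ * (x * log x + 1 - x)) := by
  have hmgf := hasSum_exp_mul_poisson μ (log x)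
  calc (∑' k : ℕ, if x * μ ≤ (k : ℝ) then μ ^ k * exp (-μ) / k ! else 0)
      ≤ exp (-(log x * (x * μ))) * exp (μ * (exp (log x) - 1)) := by
        rw [← hmgf.tsum_eq]
        exact tsum_ite_le_le_exp_mul_tsum _ _ (fun k => by positivity) (log_nonneg hx) _
          hmgf.summable
    _ = exp (-μ * (x * log x + 1 - x)) := by
        rw [exp_log (by linarith), ← exp_add]
        ring_nf

/-- Chernoff bound for the upper tail of a Poisson random variable. -/
theorem stmt_9 (μ : ℝ) (hμ : 0 < μ) (ε : ℝ) (hε : ε ∈ Set.Ioo (0:ℝ) 1) :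
    (∑' k : ℕ, if (1 + ε) * μ ≤ (k : ℝ) then μ ^ k * Real.exp (-μ) / (Nat.factorial k) else 0)
      ≤ Real.exp (-μ * ((1 + ε) * Real.log (1 + ε) + 1 - (1 + ε))) :=
  poisson_upper_tail_le hμ.le (by linarith [hε.1])
end

section
/- Let m ≥ 1 be an integer and let 0 < λ₁ ≤ λ₂ ≤ m be real numbers. If Y₁ and Y₂ are Poisson random variables with parameters λ₁ and λ₂ respectively, then Σ_{y=m}^{∞} y · Pr{Y₁ = y} ≤ Σ_{y=m}^{∞} y · Pr{Y₂ = y}, i.e. Σ_{y=m}^{∞} y·λ₁^y e^{−λ₁}/y! ≤ Σ_{y=m}^{∞} y·λ₂^y e^{−λ₂}/y!. -/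
/-!
Since `y Pr{Y = y} = λ Pr{Y = y - 1}`, the tail first moment is `λ Pr{Y ≥ m - 1}`. Both factors
are nonnegative and nondecreasing in `λ ≥ 0`: the second because
`d/dλ Pr{Y ≤ n} = -Pr{Y = n}`, the sum telescoping.
-/

open Real Finset Set Nat

noncomputable def poissonProb (x : ℝ) (k : ℕ) : ℝ := x ^ k * exp (-x) / k !

/-- `poissonCDF n x = Pr{Y < n}` for `Y` Poisson with parameter `x`. -/
noncomputable def poissonCDF (n : ℕ) (x : ℝ) : ℝ := ∑ k ∈ range n, poissonProb x k

lemma poissonProb_nonneg {x : ℝ} (hx : 0 ≤ x) (k : ℕ) : 0 ≤ poissonProb x k := by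
  unfold poissonProb; positivity

lemma succ_mul_poissonProb_succ (x : ℝ) (k : ℕ) :
    (k + 1 : ℝ) * poissonProb x (k + 1) = x * poissonProb x k := by
  simp only [poissonProb, factorial_succ, cast_mul, cast_succ, pow_succ]
  field_simp

lemma hasSum_poissonProb (x : ℝ) : HasSum (poissonProb x) 1 := by
  have h := (NormedSpace.expSeries_div_hasSum_exp x).mul_left (exp (-x))
  rw [← exp_eq_exp_ℝ, ← exp_add, neg_add_cancel, exp_zero] at h
  exact h.congr_fun fun k ↦ by simp only [poissonProb]; ring

lemma hasSum_ite_le_poissonProb (n : ℕ) (x : ℝ) :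
    HasSum (fun k ↦ if n ≤ k then poissonProb x k else 0) (1 - poissonCDF n x) := by
  have hhead : HasSum (fun k ↦ if k < n then poissonProb x k else 0) (poissonCDF n x) := by
    rw [poissonCDF, ← sum_congr rfl fun k hk ↦ if_pos (mem_range.1 hk)]
    exact hasSum_sum_of_ne_finset_zero fun k hk ↦ if_neg (by simpa using hk)
  refine ((hasSum_poissonProb x).sub hhead).congr_fun fun k ↦ ?_
  split_ifs <;> first | (exfalso; omega) | ring

/-- Also true for `m = 0`, where `m - 1 = 0`, since the term `y = 0` vanishes. -/
lemma hasSum_ite_le_mul_poissonProb (m : ℕ) (x : ℝ) :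
    HasSum (fun y : ℕ ↦ if m ≤ y then (y : ℝ) * poissonProb x y else 0)
      (x * (1 - poissonCDF (m - 1) x)) := by
  have hshift : HasSum (fun y : ℕ ↦ if m ≤ y + 1 then ((y + 1 : ℕ) : ℝ) * poissonProb x (y + 1)
      else 0) (x * (1 - poissonCDF (m - 1) x)) :=
    ((hasSum_ite_le_poissonProb (m - 1) x).mul_left x).congr_fun fun y ↦ by
      rw [cast_succ, succ_mul_poissonProb_succ, mul_ite, mul_zero]
      exact if_congr (by omega) rfl rfl
  simpa using (hasSum_nat_add_iff
    (f := fun y : ℕ ↦ if m ≤ y then (y : ℝ) * poissonProb x y else 0) 1).1 hshift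

lemma hasDerivAt_poissonProb_succ (k : ℕ) (x : ℝ) :
    HasDerivAt (fun x ↦ poissonProb x (k + 1)) (poissonProb x k - poissonProb x (k + 1)) x := by
  refine (((hasDerivAt_pow (k + 1) x).fun_mul (hasDerivAt_neg x).exp).div_const
    ((k + 1)! : ℝ)).congr_deriv ?_
  simp only [poissonProb, factorial_succ, cast_mul, cast_succ, pow_succ, Nat.add_sub_cancel]
  field_simp
  ring

lemma hasDerivAt_poissonCDF_succ (n : ℕ) (x : ℝ) :
    HasDerivAt (poissonCDF (n + 1)) (-poissonProb x n) x := by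
  induction n with
  | zero =>
    convert (hasDerivAt_neg x).exp using 1
    · ext y; simp [poissonCDF, poissonProb]
    · simp [poissonProb]
  | succ n ih =>
    have h : poissonCDF (n + 2) = fun x ↦ poissonCDF (n + 1) x + poissonProb x (n + 1) := by
      ext x; exact sum_range_succ _ _
    rw [h]
    exact (ih.fun_add (hasDerivAt_poissonProb_succ n x)).congr_deriv (by ring)

lemma antitoneOn_poissonCDF (n : ℕ) : AntitoneOn (poissonCDF n) (Ici 0) := by
  cases n with
  | zero => intro a _ b _ _; simp [poissonCDF]
  | succ n =>
    refine antitoneOn_of_hasDerivWithinAt_nonpos (convex_Ici 0)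
      (fun x _ ↦ (hasDerivAt_poissonCDF_succ n x).continuousAt.continuousWithinAt)
      (fun x _ ↦ (hasDerivAt_poissonCDF_succ n x).hasDerivWithinAt) fun x hx ↦ ?_
    rw [interior_Ici] at hx
    exact neg_nonpos.2 (poissonProb_nonneg (le_of_lt hx) n)

lemma poissonCDF_le_one (n : ℕ) {x : ℝ} (hx : 0 ≤ x) : poissonCDF n x ≤ 1 :=
  sum_le_hasSum _ (fun k _ ↦ poissonProb_nonneg hx k) (hasSum_poissonProb x)

lemma monotoneOn_mul_one_sub_poissonCDF (n : ℕ) :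
    MonotoneOn (fun x ↦ x * (1 - poissonCDF n x)) (Ici 0) :=
  monotoneOn_id.mul (fun _ hx _ hy hxy ↦ sub_le_sub_left (antitoneOn_poissonCDF n hx hy hxy) 1)
    (fun _ hx ↦ hx) fun _ hx ↦ sub_nonneg.2 (poissonCDF_le_one n hx)

theorem stmt_11_general (m : ℕ) (lam₁ lam₂ : ℝ)
    (h1 : 0 < lam₁) (h12 : lam₁ ≤ lam₂) :
    (∑' y : ℕ, if m ≤ y then (y : ℝ) * (lam₁ ^ y * Real.exp (-lam₁) / (Nat.factorial y)) else 0)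
      ≤ ∑' y : ℕ, if m ≤ y then (y : ℝ) * (lam₂ ^ y * Real.exp (-lam₂) / (Nat.factorial y)) else 0 := by
  calc _ = lam₁ * (1 - poissonCDF (m - 1) lam₁) :=
        (hasSum_ite_le_mul_poissonProb m lam₁).tsum_eq
    _ ≤ lam₂ * (1 - poissonCDF (m - 1) lam₂) :=
      monotoneOn_mul_one_sub_poissonCDF (m - 1) h1.le (h1.le.trans h12) h12
    _ = _ := (hasSum_ite_le_mul_poissonProb m lam₂).tsum_eq.symm

/-- Monotonicity in λ of the Poisson tail first moment, for λ ≤ m. -/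
theorem stmt_11 (m : ℕ) (hm : 1 ≤ m) (lam₁ lam₂ : ℝ)
    (h1 : 0 < lam₁) (h12 : lam₁ ≤ lam₂) (h2 : lam₂ ≤ m) :
    (∑' y : ℕ, if m ≤ y then (y : ℝ) * (lam₁ ^ y * Real.exp (-lam₁) / (Nat.factorial y)) else 0)
      ≤ ∑' y : ℕ, if m ≤ y then (y : ℝ) * (lam₂ ^ y * Real.exp (-lam₂) / (Nat.factorial y)) else 0 :=
  stmt_11_general m lam₁ lam₂ h1 h12
end
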